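/- There is no function f: ℝ^{4N} → ℂ with |f(z)| = 1 for all z that satisfies: for all n and all v₁,…,v_n, w₁,…,w_n ∈ ℝ^{2N}, the matrix with (i,j)-entry e^{−(i/2)(v_iᵀΩw_j + w_iᵀΩv_j)} f(v_j−v_i, w_j−w_i) is positive semidefinite, where Ω is the standard 2N×2N symplectic matrix. -/

import Mathlib

/-!
For `f` unimodular, the kernel matrix on the three points `0, z, z + z'` has unit diagonal and
unimodular off-diagonal entries; positive semidefiniteness then forces two of its rows to be
proportional, which gives `f (z + z') = f z * exp (-(i/2) σ(z, z')) * f z'` with `σ` the phase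
`twistPhase`. For antisymmetric `Ω` we have `σ(z', z) = -σ(z, z')`, so comparing with the same
identity for `z' + z` yields `exp (i σ(z, z')) = 1` for all `z, z'`. The symplectic form takes
the value `π`, a contradiction.
-/

open scoped ComplexOrder
open Complex Matrix

/-- The standard symplectic matrix `Ω = [[0, I],[−I, 0]]` on `ℝ^{2N}`. -/
noncomputable def sympMat (N : ℕ) : Matrix (Fin N ⊕ Fin N) (Fin N ⊕ Fin N) ℝ :=
  Matrix.fromBlocks 0 1 (-1) 0

namespace Matrix.PosSemidef

variable {𝕜 n : Type*} [RCLike 𝕜] [Fintype n] [DecidableEq n] {M : Matrix n n 𝕜}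

open scoped ComplexConjugate in
theorem apply_eq_mul_of_norm_eq_one (hM : M.PosSemidef) {i j : n} (hi : M i i = 1)
    (hj : M j j = 1) (hij : ‖M i j‖ = 1) (k : n) : M i k = M i j * M j k := by
  have hji : M j i = conj (M i j) := (hM.1.apply j i).symm
  have hunit : M i j * conj (M i j) = 1 := by rw [RCLike.mul_conj, hij]; norm_num
  -- equality case of Cauchy–Schwarz: this `x` is isotropic for `M`, hence in its kernel
  set x : n → 𝕜 := Pi.single i 1 - Pi.single j (conj (M i j))
  have hx : star x ⬝ᵥ M *ᵥ x = 0 := by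
    have hsx : star x = Pi.single i 1 - Pi.single j (M i j) := by simp [x]
    rw [hsx]
    simp only [x, mulVec_sub, mulVec_single, MulOpposite.op_one, one_smul, op_smul_eq_smul,
      dotProduct_sub, sub_dotProduct, single_dotProduct, col_apply, hi, mul_one, hji,
      dotProduct_smul, one_mul, hj, sub_self, smul_eq_mul, mul_zero, sub_zero]
    linear_combination -hunit
  have hk : M k i - conj (M i j) * M k j = 0 := by
    simpa [x, mulVec_sub, mulVec_single] using congrFun ((hM.dotProduct_mulVec_zero_iff x).mp hx) k
  rw [← hM.1.apply i k, ← hM.1.apply j k, sub_eq_zero.mp hk, star_mul', RCLike.star_def,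
    RCLike.conj_conj, mul_comm]

end Matrix.PosSemidef

section TwistedPosDef

variable {ι : Type*} [Fintype ι] {Ω : Matrix ι ι ℝ}

/-- For `Ω = sympMat N` this is the positivity condition defining `C_S^0(ℝ^{4N})`. -/
def IsTwistedPosDef (Ω : Matrix ι ι ℝ) (f : (ι → ℝ) × (ι → ℝ) → ℂ) : Prop :=
  ∀ (n : ℕ) (v w : Fin n → ι → ℝ),
    (Matrix.of fun i j => Complex.exp (-(I / 2) *
      (((v i ⬝ᵥ Ω *ᵥ w j : ℝ) : ℂ) + ((w i ⬝ᵥ Ω *ᵥ v j : ℝ) : ℂ))) *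
      f (v j - v i, w j - w i)).PosSemidef

def twistPhase (Ω : Matrix ι ι ℝ) (z z' : (ι → ℝ) × (ι → ℝ)) : ℝ :=
  z.1 ⬝ᵥ Ω *ᵥ z'.2 + z.2 ⬝ᵥ Ω *ᵥ z'.1

noncomputable def twistedKernel (Ω : Matrix ι ι ℝ) (f : (ι → ℝ) × (ι → ℝ) → ℂ) {n : ℕ}
    (z : Fin n → (ι → ℝ) × (ι → ℝ)) : Matrix (Fin n) (Fin n) ℂ :=
  of fun i j => exp (-(I / 2) * twistPhase Ω (z i) (z j)) * f (z j - z i)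

@[simp]
theorem twistPhase_zero_left (z : (ι → ℝ) × (ι → ℝ)) : twistPhase Ω 0 z = 0 := by
  simp [twistPhase]

theorem twistPhase_add_right (z z' z'' : (ι → ℝ) × (ι → ℝ)) :
    twistPhase Ω z (z' + z'') = twistPhase Ω z z' + twistPhase Ω z z'' := by
  simp only [twistPhase, Prod.fst_add, Prod.snd_add, mulVec_add, dotProduct_add]
  ring

theorem twistPhase_swap (hΩ : Ωᵀ = -Ω) (z z' : (ι → ℝ) × (ι → ℝ)) :
    twistPhase Ω z' z = -twistPhase Ω z z' := by
  have hskew : ∀ x y : ι → ℝ, x ⬝ᵥ Ω *ᵥ y = -(y ⬝ᵥ Ω *ᵥ x) := fun x y => by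
    rw [← dotProduct_transpose_mulVec, hΩ, neg_mulVec, dotProduct_neg]
  simp only [twistPhase, hskew z'.1, hskew z'.2]
  ring

theorem twistPhase_self (hΩ : Ωᵀ = -Ω) (z : (ι → ℝ) × (ι → ℝ)) : twistPhase Ω z z = 0 := by
  linarith [twistPhase_swap hΩ z z]

namespace IsTwistedPosDef

variable {f : (ι → ℝ) × (ι → ℝ) → ℂ}

theorem apply_zero_eq_one (hf : IsTwistedPosDef Ω f) (h0 : ‖f 0‖ = 1) : f 0 = 1 := by
  have h : 0 ≤ f 0 := by simpa [Prod.mk_zero_zero] using (hf 1 0 0).diag_nonneg (i := 0)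
  rw [Complex.eq_coe_norm_of_nonneg h, h0, ofReal_one]

theorem posSemidef_twistedKernel (hf : IsTwistedPosDef Ω f) {n : ℕ}
    (z : Fin n → (ι → ℝ) × (ι → ℝ)) : (twistedKernel Ω f z).PosSemidef := by
  have h := hf n (fun i => (z i).1) (fun i => (z i).2)
  simp only [← ofReal_add] at h
  exact h

theorem apply_add (hΩ : Ωᵀ = -Ω) (hf : IsTwistedPosDef Ω f) (hu : ∀ z, ‖f z‖ = 1)
    (z z' : (ι → ℝ) × (ι → ℝ)) :
    f (z + z') = f z * (exp (-(I / 2) * twistPhase Ω z z') * f z') := by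
  have hf0 := hf.apply_zero_eq_one (hu 0)
  have key := (hf.posSemidef_twistedKernel ![0, z, z + z']).apply_eq_mul_of_norm_eq_one
    (i := 0) (j := 1) ?_ ?_ ?_ 2
  · simpa [twistedKernel, twistPhase_add_right, twistPhase_self hΩ, hf0] using key
  · simp [twistedKernel, twistPhase_self hΩ, hf0]
  · simp [twistedKernel, twistPhase_self hΩ, hf0]
  · simp [twistedKernel, hu]

theorem exp_I_mul_twistPhase_eq_one (hΩ : Ωᵀ = -Ω) (hf : IsTwistedPosDef Ω f)
    (hu : ∀ z, ‖f z‖ = 1) (z z' : (ι → ℝ) × (ι → ℝ)) : exp (I * twistPhase Ω z z') = 1 := by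
  have hne : f z * f z' ≠ 0 := by rw [← norm_ne_zero_iff, norm_mul, hu, hu]; norm_num
  have h := (hf.apply_add hΩ hu z z').symm.trans (add_comm z z' ▸ hf.apply_add hΩ hu z' z)
  rw [twistPhase_swap hΩ z z', ofReal_neg, neg_mul_neg] at h
  have hexp : exp (-(I / 2) * twistPhase Ω z z') = exp (I / 2 * twistPhase Ω z z') := by
    apply mul_right_cancel₀ hne
    linear_combination h
  calc exp (I * twistPhase Ω z z')
      = exp (I / 2 * twistPhase Ω z z') * exp (I / 2 * twistPhase Ω z z') := by
        rw [← Complex.exp_add]; ring_nf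
    _ = exp (-(I / 2) * twistPhase Ω z z') * exp (I / 2 * twistPhase Ω z z') := by rw [hexp]
    _ = 1 := by rw [← Complex.exp_add, neg_mul, neg_add_cancel, Complex.exp_zero]

end IsTwistedPosDef

end TwistedPosDef

theorem sympMat_transpose (N : ℕ) : (sympMat N)ᵀ = -sympMat N := by
  simp [sympMat, fromBlocks_transpose, fromBlocks_neg]

theorem single_inl_dotProduct_sympMat_mulVec_single_inr {N : ℕ} (i : Fin N) (a b : ℝ) :
    Pi.single (Sum.inl i) a ⬝ᵥ sympMat N *ᵥ Pi.single (Sum.inr i) b = a * b := by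
  simp [sympMat, mulVec_single, single_dotProduct, mul_comm]

theorem no_unimodular_function_in_CS0 (N : ℕ) (hN : 1 ≤ N) :
    ¬ ∃ f : ((Fin N ⊕ Fin N) → ℝ) × ((Fin N ⊕ Fin N) → ℝ) → ℂ,
      (∀ z, ‖f z‖ = 1) ∧
      (∀ (n : ℕ) (v w : Fin n → ((Fin N ⊕ Fin N) → ℝ)),
        Matrix.PosSemidef (Matrix.of fun i j =>
          Complex.exp (-(I / 2) *
            (((dotProduct (v i) ((sympMat N).mulVec (w j)) : ℝ) : ℂ) +
             ((dotProduct (w i) ((sympMat N).mulVec (v j)) : ℝ) : ℂ))) *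
          f (v j - v i, w j - w i))) := by
  rintro ⟨f, hu, hf⟩
  have h := IsTwistedPosDef.exp_I_mul_twistPhase_eq_one (sympMat_transpose N) hf hu
    (Pi.single (.inl ⟨0, hN⟩) Real.pi, 0) (0, Pi.single (.inr ⟨0, hN⟩) 1)
  simp only [twistPhase, single_inl_dotProduct_sympMat_mulVec_single_inr] at h
  norm_num [mul_comm I, exp_pi_mul_I] at h
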